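/- arXiv:1705.03408 — 6 statements merged into one kernel-verified Lean document; each statement's English description precedes it below -/
import Mathlib

section
/- The function h(x) = coth(w₁ - x) + coth(w₂ - x), for constants w₁, w₂, satisfies the third-order-free non-linear ODE h'' - 3 h h' + h(h² - 4) = 0 at every point where sinh(w₁ - x) ≠ 0 and sinh(w₂ - x) ≠ 0. -/
/-!
Each summand `u = coth (w - x)` solves the Riccati equation `u' = u² - 1`. For a sum `h = u + v`
of two solutions this gives `h' = u² + v² - 2` and `h'' = 2u(u² - 1) + 2v(v² - 1)`, and the
equation `h'' - 3 h h' + h (h² - 4) = 0` becomes a polynomial identity in `u` and `v`.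
-/

open Filter Topology Real

theorem deriv_deriv_sub_mul_add_mul_eq_zero_of_riccati {𝕜 : Type*} [NontriviallyNormedField 𝕜]
    {u v : 𝕜 → 𝕜} {x : 𝕜}
    (hu : ∀ᶠ t in 𝓝 x, HasDerivAt u (u t ^ 2 - 1) t)
    (hv : ∀ᶠ t in 𝓝 x, HasDerivAt v (v t ^ 2 - 1) t) :
    let h : 𝕜 → 𝕜 := fun t => u t + v t
    deriv (deriv h) x - 3 * h x * deriv h x + h x * (h x ^ 2 - 4) = 0 := by
  intro h
  have hsum : ∀ᶠ t in 𝓝 x, HasDerivAt h (u t ^ 2 + v t ^ 2 - 2) t := by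
    filter_upwards [hu, hv] with t hut hvt
    exact (hut.add hvt).congr_deriv (by ring)
  have hux := hu.self_of_nhds
  have hvx := hv.self_of_nhds
  have hderiv2 : HasDerivAt (fun t => u t ^ 2 + v t ^ 2 - 2)
      (2 * u x * (u x ^ 2 - 1) + 2 * v x * (v x ^ 2 - 1)) x :=
    (((hux.pow 2).add (hvx.pow 2)).sub_const 2).congr_deriv (by ring)
  have hderiv : deriv h =ᶠ[𝓝 x] fun t => u t ^ 2 + v t ^ 2 - 2 :=
    hsum.mono fun t ht => ht.deriv
  rw [hderiv.deriv_eq, hderiv2.deriv, hsum.self_of_nhds.deriv]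
  ring

theorem hasDerivAt_cosh_sub_div_sinh_sub {w t : ℝ} (hs : sinh (w - t) ≠ 0) :
    HasDerivAt (fun s => cosh (w - s) / sinh (w - s))
      ((cosh (w - t) / sinh (w - t)) ^ 2 - 1) t := by
  have hsub : HasDerivAt (fun s => w - s) (-1) t := by
    simpa using (hasDerivAt_id t).const_sub w
  have hcosh : HasDerivAt (fun s => cosh (w - s)) (-sinh (w - t)) t := by
    simpa [Function.comp_def] using (hasDerivAt_cosh (w - t)).comp t hsub
  have hsinh : HasDerivAt (fun s => sinh (w - s)) (-cosh (w - t)) t := by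
    simpa [Function.comp_def] using (hasDerivAt_sinh (w - t)).comp t hsub
  refine (hcosh.div hsinh hs).congr_deriv ?_
  field_simp
  ring

theorem eventually_hasDerivAt_cosh_sub_div_sinh_sub {w x : ℝ} (hs : sinh (w - x) ≠ 0) :
    ∀ᶠ t in 𝓝 x, HasDerivAt (fun s => cosh (w - s) / sinh (w - s))
      ((cosh (w - t) / sinh (w - t)) ^ 2 - 1) t := by
  have hcont : Continuous fun t => sinh (w - t) := by fun_prop
  filter_upwards [hcont.continuousAt.eventually_ne hs] with t ht
  exact hasDerivAt_cosh_sub_div_sinh_sub ht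

/-- The function `h x = coth (w₁ - x) + coth (w₂ - x)` satisfies
`h'' - 3 h h' + h (h² - 4) = 0` wherever both hyperbolic sines are nonzero. -/
theorem stmt6 (w₁ w₂ : ℝ) :
    ∀ x : ℝ, Real.sinh (w₁ - x) ≠ 0 → Real.sinh (w₂ - x) ≠ 0 →
      (let h : ℝ → ℝ := fun t =>
        Real.cosh (w₁ - t) / Real.sinh (w₁ - t) +
        Real.cosh (w₂ - t) / Real.sinh (w₂ - t)
      deriv (deriv h) x - 3 * h x * deriv h x + h x * ((h x) ^ 2 - 4) = 0) := fun _ h₁ h₂ =>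
  deriv_deriv_sub_mul_add_mul_eq_zero_of_riccati
    (eventually_hasDerivAt_cosh_sub_div_sinh_sub h₁)
    (eventually_hasDerivAt_cosh_sub_div_sinh_sub h₂)
end

section
/- If ḡ : ℝ → ℝ is three times differentiable, satisfies ḡ''' = 4 ḡ', and ḡ(x) ≠ 0, then h := -ḡ'/ḡ satisfies h'' - 3 h h' + h(h² - 4) = 0. -/
/-!
Write `h = -g'/g` and `q = g''/g`. The quotient rule in the form `(f/g)' = f'/g - (f/g)(g'/g)`
gives `h' = h² - q` and, using `g''' = 4 g'`, `q' = -4h + q h`. Differentiating `h' = h² - q` once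
more and eliminating `q = h² - h'` yields `h'' = 3 h h' - h³ + 4 h`.
-/

open Topology

theorem HasDerivAt.div_ratio {f g : ℝ → ℝ} {f' g' t : ℝ} (hf : HasDerivAt f f' t)
    (hg : HasDerivAt g g' t) (ht : g t ≠ 0) :
    HasDerivAt (fun s => f s / g s) (f' / g t - f t / g t * (g' / g t)) t :=
  (hf.fun_div hg ht).congr_deriv (by field_simp)

theorem hasDerivAt_neg_deriv_div_self {g : ℝ → ℝ} {t : ℝ} (hg : DifferentiableAt ℝ g t)
    (hg' : DifferentiableAt ℝ (deriv g) t) (ht : g t ≠ 0) :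
    HasDerivAt (fun s => -deriv g s / g s)
      ((-deriv g t / g t) ^ 2 - deriv (deriv g) t / g t) t := by
  have h := (hg'.hasDerivAt.div_ratio hg.hasDerivAt ht).fun_neg
  simp only [← neg_div] at h
  exact h.congr_deriv (by ring)

/-- Linearization of the n = 2 Riccati-type equation: if `ḡ''' = 4 ḡ'` and
`ḡ x ≠ 0`, then `h := -ḡ'/ḡ` satisfies `h'' - 3 h h' + h (h² - 4) = 0` at `x`. -/
theorem stmt7 (g : ℝ → ℝ)
    (hg : Differentiable ℝ g) (hg' : Differentiable ℝ (deriv g))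
    (hg'' : Differentiable ℝ (deriv (deriv g)))
    (hODE : ∀ t, deriv (deriv (deriv g)) t = 4 * deriv g t)
    (x : ℝ) (hx : g x ≠ 0) :
    (let h : ℝ → ℝ := fun t => -deriv g t / g t
    deriv (deriv h) x - 3 * h x * deriv h x + h x * ((h x) ^ 2 - 4) = 0) := by
  intro h
  set q : ℝ → ℝ := fun t => deriv (deriv g) t / g t
  have hne : ∀ᶠ t in 𝓝 x, g t ≠ 0 := hg.continuous.continuousAt.eventually_ne hx
  have hh : HasDerivAt h (h x ^ 2 - q x) x := hasDerivAt_neg_deriv_div_self (hg x) (hg' x) hx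
  have hh' : deriv h =ᶠ[𝓝 x] fun t => h t ^ 2 - q t :=
    hne.mono fun t ht => (hasDerivAt_neg_deriv_div_self (hg t) (hg' t) ht).deriv
  have hq : HasDerivAt q (4 * deriv g x / g x - q x * (deriv g x / g x)) x := by
    rw [← hODE]
    exact (hg'' x).hasDerivAt.div_ratio (hg x).hasDerivAt hx
  have hh'' : deriv (deriv h) x =
      2 * h x * (h x ^ 2 - q x) - (4 * deriv g x / g x - q x * (deriv g x / g x)) := by
    rw [hh'.deriv_eq, ((hh.fun_pow 2).fun_sub hq).deriv]
    ring
  rw [hh'', hh.deriv]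
  simp only [h, q]
  field_simp
  ring
end

section
/- The function h(x) = coth(w₁ - x) + coth(w₂ - x) + coth(w₃ - x), for constants w₁, w₂, w₃, satisfies the third-order non-linear ODE h''' - 4 h h'' - (10 - 6 h² + 3 h') h' - (h² - 1)(h² - 9) = 0 at every point where sinh(w_l - x) ≠ 0 for l = 1,2,3. -/
/-!
Each summand `c = coth (w - t)` solves the Riccati equation `c' = c² - 1`. Hence every derivative
of `h = ∑ cₗ` is a sum `∑ Q(cₗ)` for a polynomial `Q`, obtained from the previous one by
`Q ↦ Q' · (X² - 1)`, and the equation becomes a polynomial identity in `c₁, c₂, c₃`.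
-/

open Polynomial Filter Topology Finset

/-- The derivative of `t ↦ Q (y t)` along a solution of `y' = P (y)` is `(Q' P) (y t)`. -/
noncomputable def flowDeriv (P Q : ℝ[X]) : ℝ[X] := derivative Q * P

section PolynomialFlow

variable {ι : Type*} {s : Finset ι} {P : ℝ[X]} {f : ι → ℝ → ℝ} {x : ℝ}

theorem hasDerivAt_sum_eval_of_hasDerivAt (Q : ℝ[X])
    (hf : ∀ i ∈ s, HasDerivAt (f i) (P.eval (f i x)) x) :
    HasDerivAt (fun t => ∑ i ∈ s, Q.eval (f i t)) (∑ i ∈ s, (flowDeriv P Q).eval (f i x)) x := by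
  simp only [flowDeriv, eval_mul]
  exact HasDerivAt.fun_sum fun i hi => (Q.hasDerivAt (f i x)).comp x (hf i hi)

theorem iterate_deriv_sum_eval_eventuallyEq
    (hf : ∀ᶠ y in 𝓝 x, ∀ i ∈ s, HasDerivAt (f i) (P.eval (f i y)) y) (Q : ℝ[X]) (k : ℕ) :
    deriv^[k] (fun t => ∑ i ∈ s, Q.eval (f i t)) =ᶠ[𝓝 x]
      fun t => ∑ i ∈ s, ((flowDeriv P)^[k] Q).eval (f i t) := by
  induction k with
  | zero => rfl
  | succ k ih =>
    simp only [Function.iterate_succ_apply']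
    exact ih.deriv.trans <| hf.mono fun y hy => (hasDerivAt_sum_eval_of_hasDerivAt _ hy).deriv

end PolynomialFlow

theorem hasDerivAt_coth_sub {w x : ℝ} (hx : Real.sinh (w - x) ≠ 0) :
    HasDerivAt (fun t => Real.cosh (w - t) / Real.sinh (w - t))
      ((Real.cosh (w - x) / Real.sinh (w - x)) ^ 2 - 1) x := by
  have hsub : HasDerivAt (fun t : ℝ => w - t) (-1) x := (hasDerivAt_id x).const_sub w
  refine (((Real.hasDerivAt_cosh _).comp x hsub).div
    ((Real.hasDerivAt_sinh _).comp x hsub) hx).congr_deriv ?_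
  simp only [Function.comp_apply]
  field_simp
  ring

theorem eventually_hasDerivAt_coth_sub {w x : ℝ} (hx : Real.sinh (w - x) ≠ 0) :
    ∀ᶠ y in 𝓝 x, HasDerivAt (fun t => Real.cosh (w - t) / Real.sinh (w - t))
      ((X ^ 2 - 1 : ℝ[X]).eval (Real.cosh (w - y) / Real.sinh (w - y))) y := by
  have hcont : Continuous fun t : ℝ => Real.sinh (w - t) := by fun_prop
  filter_upwards [hcont.continuousAt.eventually_ne hx] with y hy
  simpa using hasDerivAt_coth_sub hy

/-- The function `h x = coth (w₁ - x) + coth (w₂ - x) + coth (w₃ - x)` satisfies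
`h''' - 4 h h'' - (10 - 6 h² + 3 h') h' - (h² - 1)(h² - 9) = 0` wherever all
three hyperbolic sines are nonzero. -/
theorem stmt9 (w₁ w₂ w₃ : ℝ) :
    ∀ x : ℝ, Real.sinh (w₁ - x) ≠ 0 → Real.sinh (w₂ - x) ≠ 0 →
      Real.sinh (w₃ - x) ≠ 0 →
      (let h : ℝ → ℝ := fun t =>
        Real.cosh (w₁ - t) / Real.sinh (w₁ - t) +
        Real.cosh (w₂ - t) / Real.sinh (w₂ - t) +
        Real.cosh (w₃ - t) / Real.sinh (w₃ - t)
      deriv (deriv (deriv h)) x - 4 * h x * deriv (deriv h) x -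
        (10 - 6 * (h x) ^ 2 + 3 * deriv h x) * deriv h x -
        ((h x) ^ 2 - 1) * ((h x) ^ 2 - 9) = 0) := by
  intro x hx₁ hx₂ hx₃ h
  set c : Fin 3 → ℝ → ℝ := fun i t =>
    Real.cosh (![w₁, w₂, w₃] i - t) / Real.sinh (![w₁, w₂, w₃] i - t)
  have hc : ∀ᶠ y in 𝓝 x, ∀ i ∈ univ, HasDerivAt (c i) ((X ^ 2 - 1 : ℝ[X]).eval (c i y)) y := by
    filter_upwards [eventually_hasDerivAt_coth_sub hx₁, eventually_hasDerivAt_coth_sub hx₂,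
      eventually_hasDerivAt_coth_sub hx₃] with y hy₁ hy₂ hy₃
    intro i _
    fin_cases i
    exacts [hy₁, hy₂, hy₃]
  have hh : h = fun t => ∑ i, (X : ℝ[X]).eval (c i t) := by
    funext t
    simp [h, c, Fin.sum_univ_three]
  have hderiv (k : ℕ) := (iterate_deriv_sum_eval_eventuallyEq hc X k).eq_of_nhds
  have h₁ := hderiv 1
  have h₂ := hderiv 2
  have h₃ := hderiv 3
  simp only [Function.iterate_succ_apply', Function.iterate_zero_apply] at h₁ h₂ h₃
  rw [← hh] at h₁ h₂ h₃
  rw [h₁, h₂, h₃, hh]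
  simp only [flowDeriv, Fin.sum_univ_three, derivative_mul, derivative_sub,
    derivative_X_pow_succ, derivative_X, derivative_one, map_add, map_one, Nat.cast_one, zero_mul,
    eval_mul, eval_add, eval_sub, eval_pow, eval_one, eval_X, eval_C, eval_zero]
  ring
end

section
/- If ḡ : ℝ → ℝ is four times differentiable, satisfies (ḡ'''' - 10 ḡ'' + 9 ḡ) = 0 (i.e. (∂² - 1)(∂² - 9)ḡ = 0), and ḡ(x) ≠ 0, then h := -ḡ'/ḡ satisfies h''' - 4 h h'' - (10 - 6 h² + 3 h') h' - (h² - 1)(h² - 9) = 0. -/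
/-! The substitution `h = -g'/g` turns derivatives of `h` into polynomials in the ratios
`rₙ = g⁽ⁿ⁾/g`, because `rₙ' = rₙ₊₁ - r₁ rₙ` wherever `g ≠ 0`. Expressing `h, h', h'', h'''`
through `r₁, …, r₄` and substituting, the left-hand side of the Riccati-type equation collapses
to `-(r₄ - 10 r₂ + 9) = -(g'''' - 10 g'' + 9 g)/g`, which vanishes by the linear equation. -/

open Filter Topology

noncomputable def derivRatio (g : ℝ → ℝ) (n : ℕ) (t : ℝ) : ℝ := deriv^[n] g t / g t

section DerivRatio

variable {g : ℝ → ℝ} {t : ℝ}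

lemma hasDerivAt_derivRatio {n : ℕ} (hd : ∀ k ≤ n, DifferentiableAt ℝ (deriv^[k] g) t)
    (ht : g t ≠ 0) :
    HasDerivAt (derivRatio g n)
      (derivRatio g (n + 1) t - derivRatio g 1 t * derivRatio g n t) t := by
  refine ((hd n le_rfl).hasDerivAt.div (hd 0 n.zero_le).hasDerivAt ht).congr_deriv ?_
  simp only [derivRatio, Function.iterate_succ_apply', Function.iterate_zero, id]
  field_simp

lemma hasDerivAt_neg_logDeriv (hd : ∀ k ≤ 1, DifferentiableAt ℝ (deriv^[k] g) t)
    (ht : g t ≠ 0) :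
    HasDerivAt (fun s => -deriv g s / g s) (derivRatio g 1 t ^ 2 - derivRatio g 2 t) t := by
  refine (hasDerivAt_derivRatio hd ht).neg.congr_of_eventuallyEq
    (Eventually.of_forall fun s => neg_div _ _) |>.congr_deriv ?_
  ring

lemma hasDerivAt_derivRatio_sq_sub (hd : ∀ k ≤ 2, DifferentiableAt ℝ (deriv^[k] g) t)
    (ht : g t ≠ 0) :
    HasDerivAt (fun s => derivRatio g 1 s ^ 2 - derivRatio g 2 s)
      (3 * derivRatio g 1 t * derivRatio g 2 t - 2 * derivRatio g 1 t ^ 3 - derivRatio g 3 t)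
      t := by
  have h₁ := hasDerivAt_derivRatio (n := 1) (fun k hk => hd k (by omega)) ht
  have h₂ := hasDerivAt_derivRatio hd ht
  refine ((h₁.pow 2).sub h₂).congr_deriv ?_
  push_cast
  ring

lemma hasDerivAt_derivRatio_cubic (hd : ∀ k ≤ 3, DifferentiableAt ℝ (deriv^[k] g) t)
    (ht : g t ≠ 0) :
    HasDerivAt
      (fun s => 3 * derivRatio g 1 s * derivRatio g 2 s - 2 * derivRatio g 1 s ^ 3 -
        derivRatio g 3 s)
      (3 * derivRatio g 2 t ^ 2 - 12 * derivRatio g 1 t ^ 2 * derivRatio g 2 t +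
        4 * derivRatio g 1 t * derivRatio g 3 t + 6 * derivRatio g 1 t ^ 4 -
        derivRatio g 4 t) t := by
  have h₁ := hasDerivAt_derivRatio (n := 1) (fun k hk => hd k (by omega)) ht
  have h₂ := hasDerivAt_derivRatio (n := 2) (fun k hk => hd k (by omega)) ht
  have h₃ := hasDerivAt_derivRatio hd ht
  refine ((((h₁.const_mul 3).mul h₂).sub ((h₁.pow 3).const_mul 2)).sub h₃).congr_deriv ?_
  push_cast
  ring

end DerivRatio

/-- Linearization of the n = 3 Riccati-type equation: if
`ḡ'''' - 10 ḡ'' + 9 ḡ = 0` and `ḡ x ≠ 0`, then `h := -ḡ'/ḡ` satisfies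
`h''' - 4 h h'' - (10 - 6 h² + 3 h') h' - (h² - 1)(h² - 9) = 0` at `x`. -/
theorem stmt10 (g : ℝ → ℝ)
    (hg : Differentiable ℝ g) (hg' : Differentiable ℝ (deriv g))
    (hg'' : Differentiable ℝ (deriv (deriv g)))
    (hg''' : Differentiable ℝ (deriv (deriv (deriv g))))
    (hODE : ∀ t, deriv (deriv (deriv (deriv g))) t - 10 * deriv (deriv g) t + 9 * g t = 0)
    (x : ℝ) (hx : g x ≠ 0) :
    (let h : ℝ → ℝ := fun t => -deriv g t / g t
    deriv (deriv (deriv h)) x - 4 * h x * deriv (deriv h) x -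
      (10 - 6 * (h x) ^ 2 + 3 * deriv h x) * deriv h x -
      ((h x) ^ 2 - 1) * ((h x) ^ 2 - 9) = 0) := by
  intro h
  have hd : ∀ t, ∀ k ≤ 3, DifferentiableAt ℝ (deriv^[k] g) t := by
    intro t k hk
    interval_cases k
    exacts [hg t, hg' t, hg'' t, hg''' t]
  have hd' (n : ℕ) (hn : n ≤ 3) (t : ℝ) : ∀ k ≤ n, DifferentiableAt ℝ (deriv^[k] g) t :=
    fun k hk => hd t k (hk.trans hn)
  have near : ∀ᶠ t in 𝓝 x, g t ≠ 0 := hg.continuous.continuousAt.eventually_ne hx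
  have d₁ : deriv h =ᶠ[𝓝 x] fun t => derivRatio g 1 t ^ 2 - derivRatio g 2 t :=
    near.mono fun t ht => (hasDerivAt_neg_logDeriv (hd' 1 (by norm_num) t) ht).deriv
  have d₂ : deriv (deriv h) =ᶠ[𝓝 x] fun t => 3 * derivRatio g 1 t * derivRatio g 2 t -
      2 * derivRatio g 1 t ^ 3 - derivRatio g 3 t :=
    d₁.deriv.trans <| near.mono fun t ht =>
      (hasDerivAt_derivRatio_sq_sub (hd' 2 (by norm_num) t) ht).deriv
  have d₃ := d₂.deriv_eq.trans (hasDerivAt_derivRatio_cubic (hd x) hx).deriv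
  have hh : h x = -derivRatio g 1 x := neg_div _ _
  have ode : derivRatio g 4 x = 10 * derivRatio g 2 x - 9 := by
    change deriv (deriv (deriv (deriv g))) x / g x = 10 * (deriv (deriv g) x / g x) - 9
    field_simp
    linear_combination hODE x
  rw [d₃, d₂.eq_of_nhds, d₁.eq_of_nhds, hh]
  linear_combination -ode
end

section
/- If h : ℝ → ℝ is three times differentiable and satisfies h'' - 3 h h' + h(h² - 4) = 0 on ℝ, then ψ(χ, τ) := h(χ - ω τ) satisfies the PDE ∂³_τ ψ + (3/2) ω³ ∂²_χ(ψ²) - ω³ ∂_χ( ψ(ψ² - 4) ) = 0. -/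
/-!
Along the characteristic `x = χ - ω τ` every `τ`-derivative contributes a factor `-ω` and every
`χ`-derivative a factor `1`, so the left-hand side of the PDE equals
`-ω³ (h''' - (3/2) (h²)'' + (h (h² - 4))')`. Since `3 h h' = (3/2) (h²)'`, the bracket is the
derivative of the left-hand side of the ODE, hence vanishes.
-/

section TravellingWave

variable {𝕜 : Type*} [NontriviallyNormedField 𝕜]

theorem deriv_comp_const_sub_mul (f : 𝕜 → 𝕜) (a c : 𝕜) :
    deriv (fun s => f (a - c * s)) = fun s => -c * deriv f (a - c * s) := by
  funext s
  rw [deriv_comp_mul_left c (fun y => f (a - y)), deriv_comp_const_sub, smul_eq_mul]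
  ring

theorem iterate_deriv_comp_const_sub_mul (f : 𝕜 → 𝕜) (a c : 𝕜) (n : ℕ) :
    deriv^[n] (fun s => f (a - c * s)) = fun s => (-c) ^ n * deriv^[n] f (a - c * s) := by
  induction n with
  | zero => simp
  | succ n ih =>
    rw [Function.iterate_succ_apply', ih, deriv_const_mul_field',
      deriv_comp_const_sub_mul, Function.iterate_succ_apply']
    funext s
    ring

theorem deriv_deriv_comp_sub_const (f : 𝕜 → 𝕜) (a x : 𝕜) :
    deriv (deriv fun y => f (y - a)) x = deriv (deriv f) (x - a) := by
  have hfirst : deriv (fun y => f (y - a)) = fun y => deriv f (y - a) :=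
    funext fun y => deriv_comp_sub_const f a y
  rw [hfirst, deriv_comp_sub_const]

end TravellingWave

theorem deriv_deriv_deriv_eq_of_ode {h : ℝ → ℝ}
    (hdiff : Differentiable ℝ h) (hdiff' : Differentiable ℝ (deriv h))
    (hODE : ∀ t, deriv (deriv h) t - 3 * h t * deriv h t + h t * ((h t) ^ 2 - 4) = 0) (x : ℝ) :
    deriv (deriv (deriv h)) x =
      3 / 2 * deriv (deriv fun y => h y ^ 2) x - deriv (fun y => h y * (h y ^ 2 - 4)) x := by
  have hsq : deriv (fun y => h y ^ 2) = fun y => 2 * h y * deriv h y := by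
    funext y
    rw [deriv_fun_pow (hdiff y)]
    push_cast
    ring
  have hsecond : deriv (deriv h) =
      fun y => 3 / 2 * deriv (fun y => h y ^ 2) y - h y * (h y ^ 2 - 4) := by
    funext y
    rw [hsq]
    linear_combination hODE y
  have hsq_diff : DifferentiableAt ℝ (deriv fun y => h y ^ 2) x := by
    rw [hsq]
    fun_prop
  rw [hsecond, deriv_fun_sub (hsq_diff.const_mul _) (by fun_prop), deriv_const_mul _ hsq_diff]

theorem stmt14_general (h : ℝ → ℝ) (ω : ℝ)
    (hdiff : Differentiable ℝ h) (hdiff' : Differentiable ℝ (deriv h))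
    (hODE : ∀ t, deriv (deriv h) t - 3 * h t * deriv h t + h t * ((h t) ^ 2 - 4) = 0) :
    ∀ χ τ : ℝ,
      deriv (fun s => deriv (fun s' => deriv (fun s'' => h (χ - ω * s'')) s') s) τ +
        (3 / 2) * ω ^ 3 * deriv (fun c => deriv (fun c' => (h (c' - ω * τ)) ^ 2) c) χ -
        ω ^ 3 * deriv (fun c => h (c - ω * τ) * ((h (c - ω * τ)) ^ 2 - 4)) χ = 0 := by
  intro χ τ
  have htime : deriv (fun s => deriv (fun s' => deriv (fun s'' => h (χ - ω * s'')) s') s) τ =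
      (-ω) ^ 3 * deriv (deriv (deriv h)) (χ - ω * τ) :=
    congrFun (iterate_deriv_comp_const_sub_mul h χ ω 3) τ
  rw [htime, deriv_deriv_comp_sub_const (fun y => h y ^ 2),
    deriv_comp_sub_const (fun y => h y * (h y ^ 2 - 4)),
    deriv_deriv_deriv_eq_of_ode hdiff hdiff' hODE]
  ring

/-- If `h` satisfies `h'' - 3 h h' + h (h² - 4) = 0` on `ℝ`, then the
travelling wave `ψ (χ, τ) = h (χ - ω τ)` satisfies
`∂³_τ ψ + (3/2) ω³ ∂²_χ (ψ²) - ω³ ∂_χ (ψ (ψ² - 4)) = 0`. -/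
theorem stmt14 (h : ℝ → ℝ) (ω : ℝ)
    (hdiff : Differentiable ℝ h) (hdiff' : Differentiable ℝ (deriv h))
    (hdiff'' : Differentiable ℝ (deriv (deriv h)))
    (hODE : ∀ t, deriv (deriv h) t - 3 * h t * deriv h t + h t * ((h t) ^ 2 - 4) = 0) :
    ∀ χ τ : ℝ,
      deriv (fun s => deriv (fun s' => deriv (fun s'' => h (χ - ω * s'')) s') s) τ +
        (3 / 2) * ω ^ 3 * deriv (fun c => deriv (fun c' => (h (c' - ω * τ)) ^ 2) c) χ -
        ω ^ 3 * deriv (fun c => h (c - ω * τ) * ((h (c - ω * τ)) ^ 2 - 4)) χ = 0 :=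
  stmt14_general h ω hdiff hdiff' hODE
end

section
/- Define Λ(x) = φ₁ · (a(w₁-x)/b(w₁-x)) · λ_A(x) + φ₂ · (a(x-w₁)/b(x-w₁)) · λ_D(x), where a(t) = sinh(t+γ), b(t) = sinh(t), λ_A and λ_D are arbitrary differentiable functions. Then Λ satisfies the Riccati equation -sinh(γ) λ₋(x) Λ'(x) + J₁(x) Λ(x) - Λ(x)² = J₀(x) in the case λ_A, λ_D are such that λ₊ = φ₁λ_A + φ₂λ_D, λ₋ = -φ₁λ_A + φ₂λ_D, with J₀(x) = (cosh(γ) λ₊(x))² - (sinh(γ) λ₋(x))² + sinh(γ)cosh(γ)(λ₊(x)λ₋'(x) - λ₋(x)λ₊'(x)) and J₁(x) = 2cosh(γ)λ₊(x) + sinh(γ)λ₋'(x), at every point where b(w₁-x) ≠ 0. -/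
/-- The one-root eigenvalue
`Λ x = φ₁ (a(w₁-x)/b(w₁-x)) λ_A x + φ₂ (a(x-w₁)/b(x-w₁)) λ_D x`, with
`a t = sinh (t + γ)`, `b t = sinh t`, satisfies the Riccati equation
`-sinh γ · λ₋ Λ' + J₁ Λ - Λ² = J₀` wherever `b (w₁ - x) ≠ 0`. -/
theorem stmt19 (γ φ₁ φ₂ w₁ : ℂ) (lamA lamD : ℂ → ℂ)
    (hA : Differentiable ℂ lamA) (hD : Differentiable ℂ lamD) :
    (let a : ℂ → ℂ := fun t => Complex.sinh (t + γ)
    let b : ℂ → ℂ := fun t => Complex.sinh t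
    let lp : ℂ → ℂ := fun t => φ₁ * lamA t + φ₂ * lamD t
    let lm : ℂ → ℂ := fun t => -φ₁ * lamA t + φ₂ * lamD t
    let Λ : ℂ → ℂ := fun t =>
      φ₁ * (a (w₁ - t) / b (w₁ - t)) * lamA t + φ₂ * (a (t - w₁) / b (t - w₁)) * lamD t
    let J₀ : ℂ → ℂ := fun t =>
      (Complex.cosh γ * lp t) ^ 2 - (Complex.sinh γ * lm t) ^ 2 +
        Complex.sinh γ * Complex.cosh γ * (lp t * deriv lm t - lm t * deriv lp t)
    let J₁ : ℂ → ℂ := fun t =>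
      2 * Complex.cosh γ * lp t + Complex.sinh γ * deriv lm t
    ∀ x : ℂ, b (w₁ - x) ≠ 0 →
      -Complex.sinh γ * lm x * deriv Λ x + J₁ x * Λ x - (Λ x) ^ 2 = J₀ x) := by
  intro a b lp lm Λ J₀ J₁ x hx
  simp only [a, b, lp, lm, Λ, J₀, J₁] at hx ⊢
  -- the alternative form g of Λ
  set g : ℂ → ℂ := fun t => Complex.cosh γ * (φ₁ * lamA t + φ₂ * lamD t)
      - Complex.sinh γ * (Complex.cosh (w₁ - t) / Complex.sinh (w₁ - t)) *
        (-φ₁ * lamA t + φ₂ * lamD t) with hg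
  have hcont : Continuous fun t : ℂ => Complex.sinh (w₁ - t) :=
    Complex.continuous_sinh.comp (continuous_const.sub continuous_id)
  have hopen : IsOpen {t : ℂ | Complex.sinh (w₁ - t) ≠ 0} :=
    IsOpen.preimage hcont isOpen_ne
  have hev : (fun t => φ₁ * (Complex.sinh (w₁ - t + γ) / Complex.sinh (w₁ - t)) * lamA t
      + φ₂ * (Complex.sinh (t - w₁ + γ) / Complex.sinh (t - w₁)) * lamD t) =ᶠ[nhds x] g := by
    refine Filter.eventually_of_mem (hopen.mem_nhds hx) (fun t ht => ?_)
    have ht : Complex.sinh (w₁ - t) ≠ 0 := ht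
    simp only [hg]
    rw [show t - w₁ + γ = -(w₁ - t) + γ by ring, show t - w₁ = -(w₁ - t) by ring]
    rw [Complex.sinh_add, Complex.sinh_add, Complex.sinh_neg, Complex.cosh_neg]
    field_simp [ht]
    ring
  have hderivΛ : deriv (fun t => φ₁ * (Complex.sinh (w₁ - t + γ) / Complex.sinh (w₁ - t)) * lamA t
      + φ₂ * (Complex.sinh (t - w₁ + γ) / Complex.sinh (t - w₁)) * lamD t) x = deriv g x :=
    hev.deriv_eq
  -- derivative of g
  have h1 : HasDerivAt (fun t : ℂ => w₁ - t) (-1) x := by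
    simpa using (hasDerivAt_id x).const_sub w₁
  have hcosh : HasDerivAt (fun t => Complex.cosh (w₁ - t))
      (Complex.sinh (w₁ - x) * (-1)) x :=
    (Complex.hasDerivAt_cosh (w₁ - x)).comp x h1
  have hsinh : HasDerivAt (fun t => Complex.sinh (w₁ - t))
      (Complex.cosh (w₁ - x) * (-1)) x :=
    (Complex.hasDerivAt_sinh (w₁ - x)).comp x h1
  have hq : HasDerivAt (fun t => Complex.cosh (w₁ - t) / Complex.sinh (w₁ - t))
      ((Complex.sinh (w₁ - x) * (-1) * Complex.sinh (w₁ - x)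
        - Complex.cosh (w₁ - x) * (Complex.cosh (w₁ - x) * (-1)))
        / Complex.sinh (w₁ - x) ^ 2) x := hcosh.div hsinh hx
  have hAx := (hA x).hasDerivAt
  have hDx := (hD x).hasDerivAt
  have hP : HasDerivAt (fun t => φ₁ * lamA t + φ₂ * lamD t)
      (φ₁ * deriv lamA x + φ₂ * deriv lamD x) x :=
    (hAx.const_mul φ₁).add (hDx.const_mul φ₂)
  have hM : HasDerivAt (fun t => -φ₁ * lamA t + φ₂ * lamD t)
      (-φ₁ * deriv lamA x + φ₂ * deriv lamD x) x :=
    (hAx.const_mul (-φ₁)).add (hDx.const_mul φ₂)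
  have hgd : HasDerivAt g
      (Complex.cosh γ * (φ₁ * deriv lamA x + φ₂ * deriv lamD x)
        - (Complex.sinh γ * ((Complex.sinh (w₁ - x) * (-1) * Complex.sinh (w₁ - x)
            - Complex.cosh (w₁ - x) * (Complex.cosh (w₁ - x) * (-1)))
            / Complex.sinh (w₁ - x) ^ 2) * (-φ₁ * lamA x + φ₂ * lamD x)
          + Complex.sinh γ * (Complex.cosh (w₁ - x) / Complex.sinh (w₁ - x))
            * (-φ₁ * deriv lamA x + φ₂ * deriv lamD x))) x :=
    (hP.const_mul (Complex.cosh γ)).sub ((hq.const_mul (Complex.sinh γ)).mul hM)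
  rw [hderivΛ, hgd.deriv, hP.deriv, hM.deriv]
  rw [show x - w₁ + γ = -(w₁ - x) + γ by ring, show x - w₁ = -(w₁ - x) by ring]
  rw [Complex.sinh_add, Complex.sinh_add, Complex.sinh_neg, Complex.cosh_neg]
  field_simp [hx]
  ring
end
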